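/- arXiv:2409.14790 — 3 statements merged into one kernel-verified Lean document; each statement's English description precedes it below -/
import Mathlib

section
/- Let x ∈ ℂ^n with Nx ≠ 0. Then |qf_x(μ) − rq_{M,N}(x)| → r₀(x) as μ → rq_{M,N}(x) with μ ≠ rq_{M,N}(x); in other words, at its excluded point the quotient function approaches (in modulus of distance to the centre) the circle of radius r₀(x) centred at rq_{M,N}(x). -/
open Matrix Filter Topology
open scoped ComplexOrder

noncomputable def innerP {n : ℕ} (P : Matrix (Fin n) (Fin n) ℂ) (x y : Fin n → ℂ) : ℂ :=
  star y ⬝ᵥ P.mulVec x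

noncomputable def normP {n : ℕ} (P : Matrix (Fin n) (Fin n) ℂ) (x : Fin n → ℂ) : ℝ :=
  Real.sqrt (innerP P x x).re

noncomputable def rq {n : ℕ} (M N P : Matrix (Fin n) (Fin n) ℂ) (x : Fin n → ℂ) : ℂ :=
  innerP P (M.mulVec x) (N.mulVec x) / innerP P (N.mulVec x) (N.mulVec x)

noncomputable def r0 {n : ℕ} (M N P : Matrix (Fin n) (Fin n) ℂ) (x : Fin n → ℂ) : ℝ :=
  normP P (M.mulVec x - rq M N P x • N.mulVec x) / normP P (N.mulVec x)

noncomputable def qf {n : ℕ} (M N P : Matrix (Fin n) (Fin n) ℂ) (x : Fin n → ℂ) (μ : ℂ) : ℂ :=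
  (innerP P ((M - μ • N).mulVec x) (N.mulVec x) /
      (‖innerP P ((M - μ • N).mulVec x) (N.mulVec x)‖ : ℂ)) *
    ((normP P ((M - μ • N).mulVec x) / normP P (N.mulVec x) : ℝ) : ℂ) + μ

def genSpec {n : ℕ} (M N : Matrix (Fin n) (Fin n) ℂ) : Set ℂ :=
  {l : ℂ | (M - l • N).det = 0}

/-!
Write `ρ(μ) = ‖(M - μN)x‖_P / ‖Nx‖_P`. Since `⟨(M - μN)x, Nx⟩_P = (rq - μ)⟨Nx, Nx⟩_P` is nonzero
for `μ ≠ rq`, `qf μ - rq = u ρ(μ) + (μ - rq)` with `|u| = 1`, so `|qf μ - rq|` differs from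
`ρ(μ)` by at most `|μ - rq|`. As `ρ` is continuous with `ρ(rq) = r₀`, the claim follows.
-/

section

variable {n : ℕ}

lemma innerP_sub_smul_left (P : Matrix (Fin n) (Fin n) ℂ) (w v y : Fin n → ℂ) (μ : ℂ) :
    innerP P (w - μ • v) y = innerP P w y - μ * innerP P v y := by
  simp only [innerP, mulVec_sub, mulVec_smul, dotProduct_sub, dotProduct_smul, smul_eq_mul]

lemma continuous_normP (P : Matrix (Fin n) (Fin n) ℂ) : Continuous (normP P) := by
  unfold normP innerP
  fun_prop

variable (M N P : Matrix (Fin n) (Fin n) ℂ) (x : Fin n → ℂ)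

noncomputable def residualRatio (μ : ℂ) : ℝ :=
  normP P ((M - μ • N) *ᵥ x) / normP P (N *ᵥ x)

lemma residualRatio_rq : residualRatio M N P x (rq M N P x) = r0 M N P x := by
  rw [residualRatio, r0, sub_mulVec, smul_mulVec]

lemma continuous_residualRatio : Continuous (residualRatio M N P x) := by
  unfold residualRatio
  simp only [sub_mulVec, smul_mulVec]
  exact ((continuous_normP P).comp (by fun_prop)).div_const _

variable {M N P x}

lemma innerP_sub_smul_mulVec (hN : innerP P (N *ᵥ x) (N *ᵥ x) ≠ 0) (μ : ℂ) :
    innerP P ((M - μ • N) *ᵥ x) (N *ᵥ x) = (rq M N P x - μ) * innerP P (N *ᵥ x) (N *ᵥ x) := by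
  rw [sub_mulVec, smul_mulVec, innerP_sub_smul_left, sub_mul, rq, div_mul_cancel₀ _ hN]

lemma abs_norm_qf_sub_rq_sub_residualRatio_le (hN : innerP P (N *ᵥ x) (N *ᵥ x) ≠ 0) {μ : ℂ}
    (hμ : μ ≠ rq M N P x) :
    |‖qf M N P x μ - rq M N P x‖ - residualRatio M N P x μ| ≤ ‖μ - rq M N P x‖ := by
  have hc : innerP P ((M - μ • N) *ᵥ x) (N *ᵥ x) ≠ 0 := by
    rw [innerP_sub_smul_mulVec hN]
    exact mul_ne_zero (sub_ne_zero.mpr hμ.symm) hN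
  set c := innerP P ((M - μ • N) *ᵥ x) (N *ᵥ x)
  set u : ℂ := c / (‖c‖ : ℂ)
  set ρ := residualRatio M N P x μ
  have hu : ‖u‖ = 1 := by
    rw [norm_div, Complex.norm_real, norm_norm, div_self (norm_ne_zero_iff.mpr hc)]
  have hρ : ‖u * (ρ : ℂ)‖ = ρ := by
    rw [norm_mul, hu, one_mul, Complex.norm_real, Real.norm_of_nonneg]
    exact div_nonneg (Real.sqrt_nonneg _) (Real.sqrt_nonneg _)
  have hqf : qf M N P x μ - rq M N P x = u * (ρ : ℂ) + (μ - rq M N P x) := by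
    simp only [u, c, ρ, qf, residualRatio]
    ring
  have := abs_norm_sub_norm_le (u * (ρ : ℂ) + (μ - rq M N P x)) (u * (ρ : ℂ))
  rwa [hρ, add_sub_cancel_left, ← hqf] at this

end

theorem stmt_3_general {n : ℕ} (M N P : Matrix (Fin n) (Fin n) ℂ)
    (hP : P.PosDef) (x : Fin n → ℂ) (hx : N.mulVec x ≠ 0) :
    Tendsto (fun μ : ℂ => ‖qf M N P x μ - rq M N P x‖)
      (𝓝[≠] (rq M N P x)) (𝓝 (r0 M N P x)) := by
  have hN : innerP P (N *ᵥ x) (N *ᵥ x) ≠ 0 := (hP.dotProduct_mulVec_pos hx).ne'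
  have hradius : Tendsto (residualRatio M N P x) (𝓝[≠] (rq M N P x)) (𝓝 (r0 M N P x)) := by
    rw [← residualRatio_rq]
    exact (continuous_residualRatio M N P x).continuousWithinAt
  have hshift : Tendsto (fun μ : ℂ => ‖μ - rq M N P x‖) (𝓝[≠] (rq M N P x)) (𝓝 0) := by
    have hcont : Continuous fun μ : ℂ => ‖μ - rq M N P x‖ := by fun_prop
    simpa using (hcont.tendsto (rq M N P x)).mono_left nhdsWithin_le_nhds
  have hgap := squeeze_zero_norm'
    (eventually_mem_nhdsWithin.mono fun μ hμ =>
      (Real.norm_eq_abs _).trans_le (abs_norm_qf_sub_rq_sub_residualRatio_le hN hμ))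
    hshift
  simpa using hradius.add hgap

/-- at the excluded point the quotient function approaches the circle of
radius `r0 x` centred at the Rayleigh quotient. -/
theorem stmt_3 {n : ℕ} (hn : 1 ≤ n) (M N P : Matrix (Fin n) (Fin n) ℂ)
    (hP : P.PosDef) (x : Fin n → ℂ) (hx : N.mulVec x ≠ 0) :
    Tendsto (fun μ : ℂ => ‖qf M N P x μ - rq M N P x‖)
      (𝓝[≠] (rq M N P x)) (𝓝 (r0 M N P x)) :=
  stmt_3_general M N P hP x hx
end

section
/- Assume the eigenvalue problem Mx = λNx is normal with respect to ⟨·,·⟩_P and that Λ(M,N) is nonempty. Then for every μ ∈ ℂ and every x ∈ ℂ^n with Nx ≠ 0, one has dist(μ, Λ(M,N))² ≤ |rq_{M,N}(x) − μ|² + ‖Mx‖_P²/‖Nx‖_P² − |rq_{M,N}(x)|². -/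
open Matrix Filter Topology
open scoped ComplexOrder

/-! With `S = M - μ₀ N` and `Q = N S⁻¹`, the matrix `M S⁻¹ = 1 + μ₀ Q` is normal for `⟨·,·⟩_P`,
hence so is `Q`; concretely `W Q W⁻¹` is a normal matrix for any factorisation `P = Wᴴ W`.
A nonzero `z ∈ σ(Q)` corresponds to the eigenvalue `μ₀ + z⁻¹ ∈ Λ(M,N)`, so with
`d = dist(μ, Λ(M,N))` we have `d |z| ≤ |1 + (μ₀ - μ) z|` on `σ(Q)`. For a normal operator the
continuous functional calculus turns this into `d ‖Q y‖_P ≤ ‖y + (μ₀ - μ) Q y‖_P`, and `y = S x`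
gives `d ‖N x‖_P ≤ ‖(M - μ N) x‖_P`. Expanding the square, the right-hand side of the claimed
bound is exactly `‖(M - μ N) x‖_P² / ‖N x‖_P²`. -/

open scoped InnerProductSpace MatrixOrder
open WithLp (toLp)

section InnerProductSpace

variable {E : Type*} [NormedAddCommGroup E] [InnerProductSpace ℂ E]

theorem norm_sub_smul_sq_div_norm_sq (u v : E) (hv : v ≠ 0) (μ : ℂ) :
    ‖u - μ • v‖ ^ 2 / ‖v‖ ^ 2 =
      ‖⟪v, u⟫_ℂ / ⟪v, v⟫_ℂ - μ‖ ^ 2 + ‖u‖ ^ 2 / ‖v‖ ^ 2 - ‖⟪v, u⟫_ℂ / ⟪v, v⟫_ℂ‖ ^ 2 := by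
  have hv' : ‖v‖ ≠ 0 := norm_ne_zero_iff.mpr hv
  have hvv : ⟪v, v⟫_ℂ = ((‖v‖ ^ 2 : ℝ) : ℂ) := by
    rw [inner_self_eq_norm_sq_to_K]; push_cast; rfl
  rw [norm_sub_sq (𝕜 := ℂ), inner_smul_right, norm_smul, ← inner_conj_symm, hvv,
    RCLike.re_to_complex]
  generalize ⟪v, u⟫_ℂ = a
  simp only [mul_pow, Complex.sq_norm, Complex.normSq_apply, Complex.mul_re, Complex.conj_re,
    Complex.conj_im, Complex.sub_re, Complex.sub_im, Complex.div_ofReal_re, Complex.div_ofReal_im]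
  field_simp
  ring

end InnerProductSpace

section Operator

variable {H : Type*} [NormedAddCommGroup H] [InnerProductSpace ℂ H] [CompleteSpace H]

theorem ContinuousLinearMap.norm_apply_le_of_star_mul_self_le {A B : H →L[ℂ] H}
    (h : star A * A ≤ star B * B) (y : H) : ‖A y‖ ≤ ‖B y‖ := by
  have hpos := ((ContinuousLinearMap.le_def _ _).mp h).re_inner_nonneg_left y
  rw [_root_.sub_apply, inner_sub_left, map_sub, sub_nonneg,
    ContinuousLinearMap.star_eq_adjoint, ContinuousLinearMap.star_eq_adjoint,
    ContinuousLinearMap.mul_def, ContinuousLinearMap.mul_def,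
    ← ContinuousLinearMap.apply_norm_sq_eq_inner_adjoint_left,
    ← ContinuousLinearMap.apply_norm_sq_eq_inner_adjoint_left] at hpos
  exact (pow_le_pow_iff_left₀ (norm_nonneg _) (norm_nonneg _) two_ne_zero).mp hpos

theorem IsStarNormal.norm_cfc_apply_le {T : H →L[ℂ] H} [IsStarNormal T] {f g : ℂ → ℂ}
    (h : ∀ z ∈ spectrum ℂ T, ‖f z‖ ≤ ‖g z‖) (y : H)
    (hf : ContinuousOn f (spectrum ℂ T) := by cfc_cont_tac)
    (hg : ContinuousOn g (spectrum ℂ T) := by cfc_cont_tac) :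
    ‖cfc f T y‖ ≤ ‖cfc g T y‖ := by
  refine ContinuousLinearMap.norm_apply_le_of_star_mul_self_le ?_ y
  rw [← cfc_star, ← cfc_star, ← cfc_mul .., ← cfc_mul ..]
  refine cfc_mono fun z hz => ?_
  simp only [RCLike.star_def, RCLike.conj_mul]
  exact_mod_cast pow_le_pow_left₀ (norm_nonneg _) (h z hz) 2

theorem IsStarNormal.mul_norm_apply_le_norm_add_smul_apply {T : H →L[ℂ] H} [IsStarNormal T]
    {d : ℝ} (hd : 0 ≤ d) {c : ℂ} (h : ∀ z ∈ spectrum ℂ T, d * ‖z‖ ≤ ‖1 + c * z‖) (y : H) :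
    d * ‖T y‖ ≤ ‖y + c • T y‖ := by
  have key := norm_cfc_apply_le (T := T) (f := fun z => (d : ℂ) * z) (g := fun z => 1 + c * z)
    (fun z hz => by simpa [abs_of_nonneg hd] using h z hz) y
  rwa [cfc_const_mul_id (d : ℂ) T, cfc_const_add 1 (fun z => c * z) T, cfc_const_mul_id c T,
    map_one, _root_.add_apply, _root_.smul_apply, _root_.smul_apply, one_apply_eq_self, norm_smul,
    Complex.norm_real, Real.norm_of_nonneg hd] at key

end Operator

variable {n : ℕ}

theorem innerP_eq_inner {P W : Matrix (Fin n) (Fin n) ℂ} (hPW : P = Wᴴ * W) (x y : Fin n → ℂ) :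
    innerP P x y = ⟪toLp 2 (W *ᵥ y), toLp 2 (W *ᵥ x)⟫_ℂ := by
  rw [innerP, EuclideanSpace.inner_toLp_toLp, hPW, ← mulVec_mulVec, dotProduct_mulVec,
    vecMul_conjTranspose, star_star, dotProduct_comm]

theorem normP_eq_norm {P W : Matrix (Fin n) (Fin n) ℂ} (hPW : P = Wᴴ * W) (x : Fin n → ℂ) :
    normP P x = ‖toLp 2 (W *ᵥ x)‖ := by
  rw [normP, innerP_eq_inner hPW, norm_eq_sqrt_re_inner (𝕜 := ℂ), RCLike.re_to_complex]

theorem conj_padjoint_eq_conjTranspose_conj {P W : Matrix (Fin n) (Fin n) ℂ} (hW : IsUnit W)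
    (hPW : P = Wᴴ * W) (X : Matrix (Fin n) (Fin n) ℂ) :
    W * (P⁻¹ * Xᴴ * P) * W⁻¹ = (W * X * W⁻¹)ᴴ := by
  have hWd : IsUnit W.det := (isUnit_iff_isUnit_det W).mp hW
  rw [hPW, Matrix.mul_inv_rev, conjTranspose_mul, conjTranspose_mul, conjTranspose_nonsing_inv]
  simp only [Matrix.mul_assoc, mul_nonsing_inv_cancel_left _ _ hWd, mul_nonsing_inv _ hWd,
    Matrix.mul_one]

theorem isStarNormal_conj_of_commute_padjoint {P W X : Matrix (Fin n) (Fin n) ℂ} (hW : IsUnit W)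
    (hPW : P = Wᴴ * W) (hX : Commute X (P⁻¹ * Xᴴ * P)) : IsStarNormal (W * X * W⁻¹) := by
  have hWd : IsUnit W.det := (isUnit_iff_isUnit_det W).mp hW
  refine ⟨?_⟩
  rw [star_eq_conjTranspose, ← conj_padjoint_eq_conjTranspose_conj hW hPW]
  simp only [Commute, SemiconjBy, Matrix.mul_assoc, nonsing_inv_mul_cancel_left _ _ hWd]
  simpa only [Matrix.mul_assoc] using congr(W * $(hX.eq.symm) * W⁻¹)

theorem isStarNormal_conj_mul_inv_sub_smul {M N P W : Matrix (Fin n) (Fin n) ℂ} (hW : IsUnit W)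
    (hPW : P = Wᴴ * W) {μ₀ : ℂ} (hμ₀ : μ₀ ≠ 0) (hS : IsUnit (M - μ₀ • N))
    (hA : Commute (M * (M - μ₀ • N)⁻¹) (P⁻¹ * (M * (M - μ₀ • N)⁻¹)ᴴ * P)) :
    IsStarNormal (W * (N * (M - μ₀ • N)⁻¹) * W⁻¹) := by
  set S := M - μ₀ • N
  have hSd : IsUnit S.det := (isUnit_iff_isUnit_det S).mp hS
  have hC : IsStarNormal (W * (M * S⁻¹) * W⁻¹) := isStarNormal_conj_of_commute_padjoint hW hPW hA
  have hM : M * S⁻¹ = 1 + μ₀ • (N * S⁻¹) := by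
    rw [show M = S + μ₀ • N by simp [S], Matrix.add_mul, mul_nonsing_inv _ hSd, Matrix.smul_mul]
  have hQ : W * (N * S⁻¹) * W⁻¹ = (-μ₀⁻¹) • (1 - W * (M * S⁻¹) * W⁻¹) := by
    rw [hM, Matrix.mul_add, Matrix.add_mul, Matrix.mul_one,
      mul_nonsing_inv _ ((isUnit_iff_isUnit_det W).mp hW), Matrix.mul_smul, Matrix.smul_mul,
      sub_add_cancel_left, smul_neg, neg_smul, neg_neg, smul_smul, inv_mul_cancel₀ hμ₀, one_smul]
  rw [hQ]
  infer_instance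

theorem mem_genSpec_of_mem_spectrum {M N : Matrix (Fin n) (Fin n) ℂ} {μ₀ z : ℂ}
    (hS : IsUnit (M - μ₀ • N)) (hz : z ∈ spectrum ℂ (N * (M - μ₀ • N)⁻¹)) (hz0 : z ≠ 0) :
    μ₀ + z⁻¹ ∈ genSpec M N := by
  have hSd : IsUnit (M - μ₀ • N).det := (isUnit_iff_isUnit_det _).mp hS
  have hfactor : algebraMap ℂ _ z - N * (M - μ₀ • N)⁻¹ =
      (Units.mk0 z hz0 • (M - (μ₀ + z⁻¹) • N)) * (M - μ₀ • N)⁻¹ := by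
    rw [Units.smul_mk0, show z • (M - (μ₀ + z⁻¹) • N) = z • (M - μ₀ • N) - N by
      rw [add_smul, sub_add_eq_sub_sub, smul_sub, smul_smul, mul_inv_cancel₀ hz0, one_smul],
      Matrix.sub_mul, Matrix.smul_mul, mul_nonsing_inv _ hSd, Algebra.algebraMap_eq_smul_one]
  by_contra h
  refine (spectrum.mem_iff.mp hz) ?_
  rw [hfactor]
  refine ((isUnit_smul_iff _ _).mpr ?_).mul (isUnit_nonsing_inv_iff.mpr hS)
  exact (isUnit_iff_isUnit_det _).mpr (isUnit_iff_ne_zero.mpr h)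

theorem infDist_genSpec_mul_norm_le {M N : Matrix (Fin n) (Fin n) ℂ} {μ₀ z : ℂ}
    (hS : IsUnit (M - μ₀ • N)) (hz : z ∈ spectrum ℂ (N * (M - μ₀ • N)⁻¹)) (μ : ℂ) :
    Metric.infDist μ (genSpec M N) * ‖z‖ ≤ ‖1 + (μ₀ - μ) * z‖ := by
  rcases eq_or_ne z 0 with rfl | hz0
  · simp
  calc Metric.infDist μ (genSpec M N) * ‖z‖
      ≤ dist μ (μ₀ + z⁻¹) * ‖z‖ := by
        gcongr
        exact Metric.infDist_le_dist_of_mem (mem_genSpec_of_mem_spectrum hS hz hz0)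
    _ = ‖1 + (μ₀ - μ) * z‖ := by
        rw [dist_eq_norm, ← norm_mul, ← norm_neg]
        congr 1
        field_simp
        ring

theorem infDist_genSpec_mul_normP_le {M N P : Matrix (Fin n) (Fin n) ℂ} (hP : P.PosDef)
    {μ₀ : ℂ} (hμ₀ : μ₀ ≠ 0) (hS : IsUnit (M - μ₀ • N))
    (hA : Commute (M * (M - μ₀ • N)⁻¹) (P⁻¹ * (M * (M - μ₀ • N)⁻¹)ᴴ * P))
    (μ : ℂ) (x : Fin n → ℂ) :
    Metric.infDist μ (genSpec M N) * normP P (N *ᵥ x) ≤ normP P ((M - μ • N) *ᵥ x) := by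
  obtain ⟨W, hW, hPW⟩ :=
    CStarAlgebra.isStrictlyPositive_iff_eq_star_mul_self.mp hP.isStrictlyPositive
  set S := M - μ₀ • N
  have hSd : IsUnit S.det := (isUnit_iff_isUnit_det S).mp hS
  have hWd : IsUnit W.det := (isUnit_iff_isUnit_det W).mp hW
  have hT : IsStarNormal (toEuclideanCLM (𝕜 := ℂ) (W * (N * S⁻¹) * W⁻¹)) :=
    have := isStarNormal_conj_mul_inv_sub_smul hW hPW hμ₀ hS hA
    IsStarNormal.map _ _
  have hσ :
      spectrum ℂ (toEuclideanCLM (𝕜 := ℂ) (W * (N * S⁻¹) * W⁻¹)) = spectrum ℂ (N * S⁻¹) := by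
    rw [AlgEquiv.spectrum_eq]
    lift W to (Matrix (Fin n) (Fin n) ℂ)ˣ using hW
    rw [← coe_units_inv, spectrum.units_conjugate]
  have hTy : toEuclideanCLM (𝕜 := ℂ) (W * (N * S⁻¹) * W⁻¹) (toLp 2 (W *ᵥ S *ᵥ x)) =
      toLp 2 (W *ᵥ N *ᵥ x) := by
    rw [toEuclideanCLM_toLp, mulVec_mulVec, mulVec_mulVec, mulVec_mulVec]
    simp only [Matrix.mul_assoc, nonsing_inv_mul_cancel_left _ _ hWd, nonsing_inv_mul _ hSd,
      Matrix.mul_one]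
  have hres : toLp 2 (W *ᵥ S *ᵥ x) + (μ₀ - μ) • toLp 2 (W *ᵥ N *ᵥ x) =
      toLp 2 (W *ᵥ (M - μ • N) *ᵥ x) := by
    rw [← WithLp.toLp_smul, ← WithLp.toLp_add, ← mulVec_smul, ← mulVec_add, sub_mulVec,
      sub_mulVec, smul_mulVec, smul_mulVec]
    congr 2
    module
  have key := hT.mul_norm_apply_le_norm_add_smul_apply Metric.infDist_nonneg
    (fun z hz => infDist_genSpec_mul_norm_le hS (hσ ▸ hz) μ) (toLp 2 (W *ᵥ S *ᵥ x))
  rwa [hTy, hres, ← normP_eq_norm hPW, ← normP_eq_norm hPW] at key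

theorem normP_sub_smul_mulVec_sq_div_eq {M N P : Matrix (Fin n) (Fin n) ℂ} (hP : P.PosDef) (μ : ℂ)
    {x : Fin n → ℂ} (hx : N *ᵥ x ≠ 0) :
    normP P ((M - μ • N) *ᵥ x) ^ 2 / normP P (N *ᵥ x) ^ 2 =
      ‖rq M N P x - μ‖ ^ 2 + normP P (M *ᵥ x) ^ 2 / normP P (N *ᵥ x) ^ 2 - ‖rq M N P x‖ ^ 2 := by
  obtain ⟨W, hW, hPW⟩ :=
    CStarAlgebra.isStrictlyPositive_iff_eq_star_mul_self.mp hP.isStrictlyPositive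
  have hWx : toLp 2 (W *ᵥ N *ᵥ x) ≠ 0 := by
    rw [Ne, WithLp.toLp_eq_zero, ← mulVec_zero W]
    exact (mulVec_injective_iff_isUnit.mpr hW).ne hx
  rw [rq, normP_eq_norm hPW, normP_eq_norm hPW, normP_eq_norm hPW, innerP_eq_inner hPW,
    innerP_eq_inner hPW, sub_mulVec, mulVec_sub, smul_mulVec, mulVec_smul, WithLp.toLp_sub,
    WithLp.toLp_smul]
  exact norm_sub_smul_sq_div_norm_sq _ _ hWx μ

theorem normP_pos {P : Matrix (Fin n) (Fin n) ℂ} (hP : P.PosDef) {v : Fin n → ℂ} (hv : v ≠ 0) :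
    0 < normP P v :=
  Real.sqrt_pos.mpr (Complex.pos_iff.mp (hP.dotProduct_mulVec_pos hv)).1

theorem stmt_5_general {n : ℕ} (M N P : Matrix (Fin n) (Fin n) ℂ)
    (hP : P.PosDef)
    (hnormal : ∃ μ₀ : ℂ, μ₀ ≠ 0 ∧ IsUnit (M - μ₀ • N) ∧
      (M * (M - μ₀ • N)⁻¹) * (P⁻¹ * (M * (M - μ₀ • N)⁻¹)ᴴ * P) =
        (P⁻¹ * (M * (M - μ₀ • N)⁻¹)ᴴ * P) * (M * (M - μ₀ • N)⁻¹))
    (μ : ℂ) (x : Fin n → ℂ) (hx : N.mulVec x ≠ 0) :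
    (Metric.infDist μ (genSpec M N)) ^ 2 ≤
      (‖rq M N P x - μ‖) ^ 2 +
        (normP P (M.mulVec x)) ^ 2 / (normP P (N.mulVec x)) ^ 2 -
        (‖rq M N P x‖) ^ 2 := by
  obtain ⟨μ₀, hμ₀, hS, hA⟩ := hnormal
  have hbound := infDist_genSpec_mul_normP_le hP hμ₀ hS hA μ x
  have hNx := normP_pos hP hx
  rw [← normP_sub_smul_mulVec_sq_div_eq hP μ hx, le_div_iff₀ (by positivity), ← mul_pow]
  exact pow_le_pow_left₀ (mul_nonneg Metric.infDist_nonneg hNx.le) hbound 2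

/-- in normal eigenvalue problems, a bound on the distance from `μ` to the
generalized spectrum. -/
theorem stmt_5 {n : ℕ} (hn : 1 ≤ n) (M N P : Matrix (Fin n) (Fin n) ℂ)
    (hP : P.PosDef)
    (hnormal : ∃ μ₀ : ℂ, μ₀ ≠ 0 ∧ IsUnit (M - μ₀ • N) ∧
      (M * (M - μ₀ • N)⁻¹) * (P⁻¹ * (M * (M - μ₀ • N)⁻¹)ᴴ * P) =
        (P⁻¹ * (M * (M - μ₀ • N)⁻¹)ᴴ * P) * (M * (M - μ₀ • N)⁻¹))
    (hspec : (genSpec M N).Nonempty)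
    (μ : ℂ) (x : Fin n → ℂ) (hx : N.mulVec x ≠ 0) :
    (Metric.infDist μ (genSpec M N)) ^ 2 ≤
      (‖rq M N P x - μ‖) ^ 2 +
        (normP P (M.mulVec x)) ^ 2 / (normP P (N.mulVec x)) ^ 2 -
        (‖rq M N P x‖) ^ 2 :=
  stmt_5_general M N P hP hnormal μ x hx
end

section
/- Assume the pencil (M,N) is self-adjoint with respect to P and let μ ∈ ℝ. If x₁, x₂ ∈ ℂ^n satisfy Mx₁ = λ₁Nx₁ and Mx₂ = λ₂Nx₂ with real eigenvalues λ₁ ≠ λ₂, then ⟨(M−μN)x₁, (M−μN)x₂⟩_P = 0. -/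
open Matrix Filter Topology
open scoped ComplexOrder

/-!
Self-adjointness says that `⟨M x, N y⟩_P = ⟨N x, M y⟩_P`. For eigenvectors with real eigenvalues
the two sides are `λ₁ ⟨N x₁, N x₂⟩_P` and `λ₂ ⟨N x₁, N x₂⟩_P`, so `λ₁ ≠ λ₂` forces
`⟨N x₁, N x₂⟩_P = 0`. Finally `(M - μN) xᵢ = (λᵢ - μ) N xᵢ`, so the claim is a multiple of this.
-/

section innerP

variable {n : ℕ}

theorem innerP_smul_left (P : Matrix (Fin n) (Fin n) ℂ) (a : ℂ) (x y : Fin n → ℂ) :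
    innerP P (a • x) y = a * innerP P x y := by
  simp only [innerP, mulVec_smul, dotProduct_smul, smul_eq_mul]

theorem innerP_smul_right (P : Matrix (Fin n) (Fin n) ℂ) (a : ℂ) (x y : Fin n → ℂ) :
    innerP P x (a • y) = starRingEnd ℂ a * innerP P x y := by
  simp only [innerP, star_smul, smul_dotProduct, smul_eq_mul, Complex.star_def]

theorem innerP_mulVec_mulVec (P A B : Matrix (Fin n) (Fin n) ℂ) (x y : Fin n → ℂ) :
    innerP P (A *ᵥ x) (B *ᵥ y) = innerP (Bᴴ * P * A) x y := by
  simp only [innerP, star_mulVec, dotProduct_mulVec, vecMul_vecMul, mulVec_mulVec, mul_assoc]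

theorem conjTranspose_mul_mul_eq_of_isHermitian {ι R : Type*} [Fintype ι] [Semiring R]
    [StarRing R] {P M N : Matrix ι ι R}
    (hP : P.IsHermitian) (hsa : (Nᴴ * P * M).IsHermitian) :
    Nᴴ * P * M = Mᴴ * P * N := by
  conv_lhs => rw [← hsa.eq]
  rw [conjTranspose_mul, conjTranspose_mul, conjTranspose_conjTranspose, hP.eq, mul_assoc]

theorem innerP_mulVec_comm_of_isHermitian {P M N : Matrix (Fin n) (Fin n) ℂ}
    (hP : P.IsHermitian) (hsa : (Nᴴ * P * M).IsHermitian) (x y : Fin n → ℂ) :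
    innerP P (M *ᵥ x) (N *ᵥ y) = innerP P (N *ᵥ x) (M *ᵥ y) := by
  rw [innerP_mulVec_mulVec, innerP_mulVec_mulVec, conjTranspose_mul_mul_eq_of_isHermitian hP hsa]

theorem innerP_mulVec_eq_zero_of_eigenvalue_ne {P M N : Matrix (Fin n) (Fin n) ℂ}
    (hP : P.IsHermitian) (hsa : (Nᴴ * P * M).IsHermitian) {x₁ x₂ : Fin n → ℂ} {l₁ l₂ : ℝ}
    (h₁ : M *ᵥ x₁ = (l₁ : ℂ) • N *ᵥ x₁) (h₂ : M *ᵥ x₂ = (l₂ : ℂ) • N *ᵥ x₂) (hne : l₁ ≠ l₂) :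
    innerP P (N *ᵥ x₁) (N *ᵥ x₂) = 0 := by
  have hcomm := innerP_mulVec_comm_of_isHermitian hP hsa x₁ x₂
  rw [h₁, h₂, innerP_smul_left, innerP_smul_right, Complex.conj_ofReal] at hcomm
  have hprod : ((l₁ : ℂ) - l₂) * innerP P (N *ᵥ x₁) (N *ᵥ x₂) = 0 := by
    rw [sub_mul, hcomm, sub_self]
  exact (mul_eq_zero.mp hprod).resolve_left (sub_ne_zero.mpr (Complex.ofReal_injective.ne hne))

end innerP

theorem sub_smul_mulVec_of_mulVec_eq_smul {m ι R : Type*} [Fintype ι] [CommRing R]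
    {M N : Matrix m ι R} {x : ι → R} {l : R} (h : M *ᵥ x = l • N *ᵥ x) (μ : R) :
    (M - μ • N) *ᵥ x = (l - μ) • N *ᵥ x := by
  rw [sub_mulVec, smul_mulVec, h, sub_smul]

/-- eigenvectors of a self-adjoint pencil associated with distinct real
eigenvalues satisfy the orthogonality condition `⟨(M−μN)x₁,(M−μN)x₂⟩_P = 0`. -/
theorem stmt_13 {n : ℕ} (M N P : Matrix (Fin n) (Fin n) ℂ)
    (hP : P.PosDef) (hsa : (Nᴴ * P * M).IsHermitian) (μ : ℝ)
    (x1 x2 : Fin n → ℂ) (l1 l2 : ℝ)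
    (h1 : M.mulVec x1 = (l1 : ℂ) • N.mulVec x1)
    (h2 : M.mulVec x2 = (l2 : ℂ) • N.mulVec x2)
    (hne : l1 ≠ l2) :
    innerP P ((M - (μ : ℂ) • N).mulVec x1) ((M - (μ : ℂ) • N).mulVec x2) = 0 := by
  rw [sub_smul_mulVec_of_mulVec_eq_smul h1, sub_smul_mulVec_of_mulVec_eq_smul h2, innerP_smul_left,
    innerP_smul_right, innerP_mulVec_eq_zero_of_eigenvalue_ne hP.isHermitian hsa h1 h2 hne,
    mul_zero, mul_zero]
end
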